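/- There exist two spherical quadrilaterals, parametrized by small θ, φ > 0, with vertices A=(0,0,1), B=(cos θ, −sin θ, 0), C=(−1,0,0), D=(cos φ cos θ, cos φ sin θ, −sin φ) and A'=(0,0,1), B'=(cos 3θ, −sin 3θ, 0), C'=(−1,0,0), D'=(cos φ cos θ, −cos φ sin θ, sin φ), such that the spherical distance from A to B equals that from A' to B' (both π/2), the spherical distance from D to A is π/2+φ while that from D' to A' is π/2−φ, and in particular the quadrilaterals are not isometric although they share the edge length |AB| = |A'B'| = π/2. -/
import Mathlib


noncomputable section
open Real
open scoped RealInnerProductSpace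

/-- A point of `ℝ³` given by its coordinates. -/
def vec3 (x y z : ℝ) : EuclideanSpace ℝ (Fin 3) :=
  (WithLp.equiv 2 (Fin 3 → ℝ)).symm ![x, y, z]

/-- The spherical distance between two unit vectors. -/
def sdist' (v w : EuclideanSpace ℝ (Fin 3)) : ℝ := Real.arccos ⟪v, w⟫

lemma inner_vec3 (x y z x' y' z' : ℝ) :
    ⟪vec3 x y z, vec3 x' y' z'⟫ = x * x' + y * y' + z * z' := by
  simp [vec3, PiLp.inner_apply, Fin.sum_univ_three, mul_comm]

lemma arccos_sin (φ : ℝ) (h0 : 0 ≤ φ) (h1 : φ ≤ π / 2) :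
    Real.arccos (sin φ) = π / 2 - φ := by
  rw [← Real.cos_pi_div_two_sub, Real.arccos_cos (by linarith) (by linarith [Real.pi_pos.le])]

/-- For all small `θ, φ > 0`, the two spherical quadrilaterals
`A B C D` and `A' B' C' D'` below satisfy `|AB| = |A'B'| = π/2`,
`|DA| = π/2 + φ`, `|D'A'| = π/2 - φ`, and in particular they are not
isometric although they share the edge length `|AB| = |A'B'|`. -/
theorem statement19 (θ φ : ℝ) (hθ : 0 < θ) (hθ' : θ < π / 8)
    (hφ : 0 < φ) (hφ' : φ < π / 8) :
    sdist' (vec3 0 0 1) (vec3 (cos θ) (-sin θ) 0) = π / 2 ∧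
    sdist' (vec3 0 0 1) (vec3 (cos (3 * θ)) (-sin (3 * θ)) 0) = π / 2 ∧
    sdist' (vec3 (cos φ * cos θ) (cos φ * sin θ) (-sin φ)) (vec3 0 0 1) =
      π / 2 + φ ∧
    sdist' (vec3 (cos φ * cos θ) (-(cos φ * sin θ)) (sin φ)) (vec3 0 0 1) =
      π / 2 - φ ∧
    ¬∃ g : EuclideanSpace ℝ (Fin 3) ≃ₗᵢ[ℝ] EuclideanSpace ℝ (Fin 3),
      g (vec3 0 0 1) = vec3 0 0 1 ∧
      g (vec3 (cos θ) (-sin θ) 0) = vec3 (cos (3 * θ)) (-sin (3 * θ)) 0 ∧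
      g (vec3 (-1) 0 0) = vec3 (-1) 0 0 ∧
      g (vec3 (cos φ * cos θ) (cos φ * sin θ) (-sin φ)) =
        vec3 (cos φ * cos θ) (-(cos φ * sin θ)) (sin φ) := by
  have hφ2 : φ ≤ π / 2 := by linarith [Real.pi_pos]
  have hsin : Real.arccos (sin φ) = π / 2 - φ := arccos_sin φ hφ.le hφ2
  refine ⟨?_, ?_, ?_, ?_, ?_⟩
  · rw [sdist', inner_vec3]; norm_num [Real.arccos_zero]
  · rw [sdist', inner_vec3]; norm_num [Real.arccos_zero]
  · rw [sdist', inner_vec3]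
    norm_num
    rw [Real.arccos_neg, hsin]; ring
  · rw [sdist', inner_vec3]
    norm_num [hsin]
  · rintro ⟨g, hA, -, -, hD⟩
    have h := g.inner_map_map (vec3 (cos φ * cos θ) (cos φ * sin θ) (-sin φ)) (vec3 0 0 1)
    rw [hA, hD, inner_vec3, inner_vec3] at h
    have hs : sin φ > 0 := Real.sin_pos_of_pos_of_lt_pi hφ (by linarith [Real.pi_pos])
    nlinarith
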